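/- arXiv:0806.0214 — 2 statements merged into one kernel-verified Lean document; each statement's English description precedes it below -/
import Mathlib

section
/- Let 0 ≤ l ≤ n−1 and let 1 ≤ i_1 < i_2 < ⋯ < i_l ≤ n−1. Then, in W_n, s_1 s_2 ⋯ s_{n−1} · r_{i_1} ⋯ r_{i_l} = r_{i_1+1} ⋯ r_{i_l+1} · s_{l+1} s_{l+2} ⋯ s_{n−1}. -/
/-!
Common setup: the Weyl group `W n` of type `B_n`, realized as the group of
permutations `w` of `I_n = {±1, …, ±n}` (inside `Equiv.Perm ℤ`, fixing every
integer of absolute value `> n`) such that `w (-i) = - w i` for all `i`.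
-/

namespace TypeB

/-- The generator `t = (1, -1)`. -/
def t : Equiv.Perm ℤ := Equiv.swap 1 (-1)

/-- The generator `s i = (i, i+1)(-i, -(i+1))` (meaningful for `1 ≤ i`). -/
def s (i : ℕ) : Equiv.Perm ℤ :=
  Equiv.swap (i : ℤ) ((i : ℤ) + 1) * Equiv.swap (-(i : ℤ)) (-((i : ℤ) + 1))

/-- The generating set `S_n = {t, s_1, …, s_{n-1}}`. -/
def gens (n : ℕ) : Set (Equiv.Perm ℤ) :=
  {t} ∪ {x | ∃ i : ℕ, 1 ≤ i ∧ i < n ∧ x = s i}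

/-- The Weyl group `W_n` of type `B_n`, as a subgroup of `Equiv.Perm ℤ`:
permutations `w` with `w (-i) = - (w i)` for all `i` and fixing all `i` with `|i| > n`. -/
def W (n : ℕ) : Subgroup (Equiv.Perm ℤ) where
  carrier := {w | (∀ i : ℤ, w (-i) = - w i) ∧ ∀ i : ℤ, (n : ℤ) < |i| → w i = i}
  one_mem' := ⟨fun _ => rfl, fun _ _ => rfl⟩
  mul_mem' := by
    rintro u v ⟨hu1, hu2⟩ ⟨hv1, hv2⟩
    refine ⟨fun i => ?_, fun i hi => ?_⟩
    · simp only [Equiv.Perm.mul_apply, hv1, hu1]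
    · simp only [Equiv.Perm.mul_apply, hv2 i hi, hu2 i hi]
  inv_mem' := by
    rintro u ⟨hu1, hu2⟩
    refine ⟨fun i => ?_, fun i hi => ?_⟩
    · apply u.injective
      rw [Equiv.Perm.coe_inv, Equiv.apply_symm_apply, hu1, Equiv.apply_symm_apply]
    · apply u.injective
      rw [Equiv.Perm.coe_inv, Equiv.apply_symm_apply, hu2 i hi]

/-- The length of `w` with respect to the generating set `S_n`. -/
noncomputable def len (n : ℕ) (w : Equiv.Perm ℤ) : ℕ :=
  sInf {k | ∃ l : List (Equiv.Perm ℤ), (∀ x ∈ l, x ∈ gens n) ∧ l.prod = w ∧ l.length = k}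

/-- `l` is a reduced expression for `w` with respect to `S_n`. -/
def IsReduced (n : ℕ) (w : Equiv.Perm ℤ) (l : List (Equiv.Perm ℤ)) : Prop :=
  (∀ x ∈ l, x ∈ gens n) ∧ l.prod = w ∧ l.length = len n w

/-- `ℓ_t w`: the number of occurrences of `t` in a reduced expression of `w`
(independent of the chosen reduced expression). -/
noncomputable def lent (n : ℕ) (w : Equiv.Perm ℤ) : ℕ :=
  letI : DecidableEq (Equiv.Perm ℤ) := Classical.decEq _
  sInf {m | ∃ l, IsReduced n w l ∧ l.count t = m}

/-- `r 1 = t` and `r (i+1) = s i * r i`. -/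
def r : ℕ → Equiv.Perm ℤ
  | 0 => 1
  | 1 => t
  | (i + 2) => s (i + 1) * r (i + 1)

/-- `t_1 = t` and `t_{i+1} = s_i * t_i * s_i`. -/
def tperm : ℕ → Equiv.Perm ℤ
  | 0 => 1
  | 1 => t
  | (i + 2) => s (i + 1) * tperm (i + 1) * s (i + 1)

/-- `a l = r 1 * r 2 * ⋯ * r l`, with `a 0 = 1`. -/
def a : ℕ → Equiv.Perm ℤ
  | 0 => 1
  | (l + 1) => a l * r (l + 1)

/-- The symmetric group `𝔖_n`: the subgroup generated by `s_1, …, s_{n-1}`. -/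
def Sym (n : ℕ) : Subgroup (Equiv.Perm ℤ) :=
  Subgroup.closure {x | ∃ i : ℕ, 1 ≤ i ∧ i < n ∧ x = s i}

/-- The parabolic subgroup `𝔖_{l,n-l}`: generated by `{s_1, …, s_{n-1}} \ {s_l}`. -/
def SymP (n l : ℕ) : Subgroup (Equiv.Perm ℤ) :=
  Subgroup.closure {x | ∃ i : ℕ, 1 ≤ i ∧ i < n ∧ i ≠ l ∧ x = s i}

/-- `Y_{l,n-l}`: elements of `𝔖_n` of minimal length in their coset `w 𝔖_{l,n-l}`. -/
def Y (n l : ℕ) : Set (Equiv.Perm ℤ) :=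
  {w | w ∈ Sym n ∧ ∀ u ∈ SymP n l, len n w ≤ len n (w * u)}

/-- The subgroup `𝔖_{[i,j]}` generated by `s_i, …, s_{j-1}`. -/
def SymI (i j : ℕ) : Subgroup (Equiv.Perm ℤ) :=
  Subgroup.closure {x | ∃ k : ℕ, i ≤ k ∧ k < j ∧ x = s k}

/-- The function reversing the interval `[i,j]` (and `[-j,-i]`), for `1 ≤ i`. -/
def revFun (i j : ℤ) : ℤ → ℤ := fun k =>
  if 1 ≤ i ∧ i ≤ k ∧ k ≤ j then i + j - k
  else if 1 ≤ i ∧ -j ≤ k ∧ k ≤ -i then -(i + j) - k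
  else k

lemma revFun_involutive (i j : ℤ) : Function.Involutive (revFun i j) := by
  intro k
  unfold revFun
  split_ifs <;> omega

/-- `σ_{[i,j]}`: the longest element of `𝔖_{[i,j]}`, i.e. the order-reversing
permutation of the interval `[i,j]` (extended to `I_n` by `w(-k) = -w(k)`). -/
def sigmaI (i j : ℕ) : Equiv.Perm ℤ := (revFun_involutive (i : ℤ) (j : ℤ)).toPerm

/-- `σ_{l,n-l}`: the longest element of `𝔖_{l,n-l} = 𝔖_{[1,l]} × 𝔖_{[l+1,n]}`. -/
def sigmaLL (n l : ℕ) : Equiv.Perm ℤ := sigmaI 1 l * sigmaI (l + 1) n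

/-- The function negating all `k` with `|k| ≤ n`. -/
def negnFun (n : ℤ) : ℤ → ℤ := fun k => if -n ≤ k ∧ k ≤ n then -k else k

lemma negnFun_involutive (n : ℤ) : Function.Involutive (negnFun n) := by
  intro k
  unfold negnFun
  split_ifs <;> omega

/-- `w_n`: the longest element of `W_n`; as a permutation, `w_n i = -i` for `|i| ≤ n`. -/
def wlong (n : ℕ) : Equiv.Perm ℤ := (negnFun_involutive (n : ℤ)).toPerm

/-- `c_I = s_{i_1} s_{i_2} ⋯ s_{i_k}` for `I = {i_1 < i_2 < ⋯ < i_k}`. -/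
def cElt (I : Finset ℕ) : Equiv.Perm ℤ := ((I.sort (· ≤ ·)).map s).prod

/-- `d_I = s_{i_k} ⋯ s_{i_2} s_{i_1}` for `I = {i_1 < i_2 < ⋯ < i_k}`. -/
def dElt (I : Finset ℕ) : Equiv.Perm ℤ := (((I.sort (· ≤ ·)).map s).reverse).prod

/-- `X_n^{(m)}`: elements of `W_n` of minimal length in their coset `w W_m`. -/
def X (n m : ℕ) : Set (Equiv.Perm ℤ) :=
  {w | w ∈ W n ∧ ∀ u ∈ W m, len n w ≤ len n (w * u)}

/-- Bruhat order: `x ≤ y` iff some reduced expression of `y` contains a subword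
which is a reduced expression of `x`. -/
def BruhatLE (n : ℕ) (x y : Equiv.Perm ℤ) : Prop :=
  ∃ ly, IsReduced n y ly ∧ ∃ lx, lx.Sublist ly ∧ IsReduced n x lx

/-- Strict Bruhat order. -/
def BruhatLT (n : ℕ) (x y : Equiv.Perm ℤ) : Prop := BruhatLE n x y ∧ x ≠ y

/-- `D_i(W_n)`: the set of `x` such that exactly one of `s_i, s_{i+1}` is a
(right) descent of `x`. -/
def Dset (n i : ℕ) : Set (Equiv.Perm ℤ) :=
  {x | Xor' (len n (x * s i) < len n x) (len n (x * s (i + 1)) < len n x)}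

open Classical in
/-- `γ_i x`: the unique element of `{x s_i, x s_{i+1}} ∩ D_i(W_n)` (for `x ∈ D_i(W_n)`). -/
noncomputable def gamma (n i : ℕ) (x : Equiv.Perm ℤ) : Equiv.Perm ℤ :=
  if x * s i ∈ Dset n i then x * s i else x * s (i + 1)

/-- `E_m^{(r)}`: the set of `w ∈ W_m` such that `|w 1| > |w i|` for `2 ≤ i ≤ r+2`
and `(w 2, …, w (r+2))` is a shuffle of a positive decreasing sequence and a
negative increasing sequence. -/
def E (m ρ : ℕ) : Set (Equiv.Perm ℤ) :=
  {w | w ∈ W m ∧ (∀ i : ℕ, 2 ≤ i → i ≤ ρ + 2 → |w (i : ℤ)| < |w (1 : ℤ)|) ∧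
    ∀ i j : ℕ, 2 ≤ i → i < j → j ≤ ρ + 2 →
      (0 < w (i : ℤ) → 0 < w (j : ℤ) → w (j : ℤ) < w (i : ℤ)) ∧
      (w (i : ℤ) < 0 → w (j : ℤ) < 0 → w (i : ℤ) < w (j : ℤ))}

/-- The product `r_{i_1} ⋯ r_{i_l}` for a sequence `i : Fin l → ℕ`. -/
def prodR {l : ℕ} (i : Fin l → ℕ) : Equiv.Perm ℤ := (List.ofFn fun k => r (i k)).prod

/-- `(l, α, β, σ)` is a decomposition of `w` as in the decomposition lemma:
`l ≤ n`, `α, β ∈ Y_{l,n-l}`, `σ ∈ 𝔖_{l,n-l}` and `w = α a_l σ β⁻¹`. -/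
def IsDecomp (n : ℕ) (w : Equiv.Perm ℤ) (l : ℕ) (α β σ : Equiv.Perm ℤ) : Prop :=
  l ≤ n ∧ α ∈ Y n l ∧ β ∈ Y n l ∧ σ ∈ SymP n l ∧ w = α * a l * σ * β⁻¹



/-!
The chain `s_j s_{j+1} ⋯ s_{j+m}` passes through `r_i`, for `j ≤ i ≤ j + m`, as
`s_j ⋯ s_{j+m} · r_i = r_{i+1} · s_{j+1} ⋯ s_{j+m}`: the factors `s_k` with `k > i` commute
with `r_i`, `s_i r_i = r_{i+1}`, and each `s_k` with `k < i` becomes `s_{k+1}` when moved to the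
right of `r_{i+1}` (a consequence of the braid relation). Pushing `s_1 ⋯ s_{n-1}` through
`r_{i_1}, …, r_{i_l}` in turn removes one factor from the front of the chain each time.
-/

lemma _root_.Equiv.swap_braid {α : Type*} [DecidableEq α] {x y z : α} (hxy : x ≠ y)
    (hxz : x ≠ z) (hyz : y ≠ z) :
    Equiv.swap x y * Equiv.swap y z * Equiv.swap x y =
      Equiv.swap y z * Equiv.swap x y * Equiv.swap y z := by
  rw [Equiv.swap_mul_swap_mul_swap hxy hxz, Equiv.swap_comm x y, Equiv.swap_comm y z,
    Equiv.swap_mul_swap_mul_swap hyz.symm hxz.symm, Equiv.swap_comm]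

lemma _root_.braid_mul_of_commute {G : Type*} [Group G] {a b c d : G} (hab : Commute a b)
    (hcd : Commute c d) (had : Commute a d) (hbc : Commute b c) (hac : a * c * a = c * a * c)
    (hbd : b * d * b = d * b * d) :
    a * b * (c * d) * (a * b) = c * d * (a * b) * (c * d) := by
  calc a * b * (c * d) * (a * b) = a * c * (b * d) * (a * b) := by rw [hbc.mul_mul_mul_comm]
    _ = a * c * a * (b * d * b) := by
      rw [(hab.symm.mul_left had.symm).mul_mul_mul_comm]
    _ = c * a * c * (d * b * d) := by rw [hac, hbd]
    _ = c * d * (a * b) * (c * d) := by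
      rw [had.symm.mul_mul_mul_comm, (hcd.symm.mul_left hbc).mul_mul_mul_comm]

lemma commute_s_s {i j : ℕ} (h : i + 2 ≤ j) : Commute (s i) (s j) := by
  refine Equiv.Perm.Disjoint.commute (.mul_left (.mul_right ?_ ?_) (.mul_right ?_ ?_)) <;>
    apply Equiv.Perm.disjoint_swap_swap <;> simp <;> omega

lemma commute_t_s {j : ℕ} (h : 2 ≤ j) : Commute t (s j) := by
  refine Equiv.Perm.Disjoint.commute (.mul_right ?_ ?_) <;>
    apply Equiv.Perm.disjoint_swap_swap <;> simp <;> omega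

lemma s_braid {j : ℕ} (h : 1 ≤ j) : s j * s (j + 1) * s j = s (j + 1) * s j * s (j + 1) := by
  have hcomm {x y z w : ℤ} (hnd : [x, y, z, w].Nodup) :
      Commute (Equiv.swap x y) (Equiv.swap z w) :=
    (Equiv.Perm.disjoint_swap_swap hnd).commute
  simp only [s]
  push_cast
  exact braid_mul_of_commute (hcomm (by simp; omega)) (hcomm (by simp; omega))
    (hcomm (by simp; omega)) (hcomm (by simp; omega))
    (Equiv.swap_braid (by omega) (by omega) (by omega))
    (Equiv.swap_braid (by omega) (by omega) (by omega))

lemma s_mul_r {i : ℕ} (h : 1 ≤ i) : s i * r i = r (i + 1) := by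
  obtain ⟨i, rfl⟩ := Nat.exists_eq_add_of_le' h
  rfl

lemma commute_s_r {i j : ℕ} (h : i < j) : Commute (s j) (r i) := by
  induction i with
  | zero => exact Commute.one_right _
  | succ i ih =>
    rcases Nat.eq_zero_or_pos i with rfl | hi
    · exact (commute_t_s h).symm
    · rw [← s_mul_r hi]
      exact ((commute_s_s (by omega)).symm).mul_right (ih (by omega))

lemma s_mul_r_of_add_two_le {i j : ℕ} (hj : 1 ≤ j) (h : j + 2 ≤ i) :
    s j * r i = r i * s (j + 1) := by
  induction i, h using Nat.le_induction with
  | base =>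
    have hr : r (j + 2) = s (j + 1) * s j * r j := by
      rw [mul_assoc, s_mul_r hj, s_mul_r (by omega)]
    rw [hr, ← mul_assoc, ← mul_assoc, s_braid hj, mul_assoc _ (s (j + 1)),
      (commute_s_r (by omega)).eq, ← mul_assoc]
  | succ i hi ih =>
    rw [← s_mul_r (by omega), ← mul_assoc, (commute_s_s hi).eq, mul_assoc, ih, ← mul_assoc]

def sChain (j m : ℕ) : Equiv.Perm ℤ := ((List.range' j m).map s).prod

lemma sChain_zero (j : ℕ) : sChain j 0 = 1 := rfl

lemma sChain_succ (j m : ℕ) : sChain j (m + 1) = s j * sChain (j + 1) m := by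
  simp [sChain, List.range'_succ]

lemma commute_sChain_r {i j : ℕ} (h : i < j) (m : ℕ) : Commute (sChain j m) (r i) := by
  refine Commute.list_prod_left _ _ fun x hx => ?_
  obtain ⟨k, hk, rfl⟩ := List.mem_map.1 hx
  exact commute_s_r (by simp at hk; omega)

lemma sChain_mul_r {i j m : ℕ} (hj : 1 ≤ j) (hji : j ≤ i) (hi : i ≤ j + m) :
    sChain j (m + 1) * r i = r (i + 1) * sChain (j + 1) m := by
  induction m generalizing j with
  | zero =>
    obtain rfl : i = j := by omega
    rw [sChain_succ, sChain_zero, mul_one, mul_one, s_mul_r hj]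
  | succ m ih =>
    rcases hji.eq_or_lt with rfl | hji
    · rw [sChain_succ, mul_assoc, (commute_sChain_r (by omega) _).eq, ← mul_assoc, s_mul_r hj]
    · rw [sChain_succ, mul_assoc, ih (by omega) hji (by omega), ← mul_assoc,
        s_mul_r_of_add_two_le hj (by omega), mul_assoc, ← sChain_succ]

lemma prodR_succ {l : ℕ} (i : Fin (l + 1) → ℕ) :
    prodR i = r (i 0) * prodR (fun k => i k.succ) := by
  simp [prodR, List.ofFn_succ]

lemma sChain_mul_prodR {l : ℕ} (i : Fin l → ℕ) (hi : StrictMono i) {j m : ℕ} (hj : 1 ≤ j)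
    (hij : ∀ k, j ≤ i k ∧ i k < j + m) :
    sChain j m * prodR i = prodR (fun k => i k + 1) * sChain (j + l) (m - l) := by
  induction l generalizing j m with
  | zero => simp [prodR]
  | succ l ih =>
    obtain ⟨m, rfl⟩ : ∃ m', m = m' + 1 := ⟨m - 1, by have := hij 0; omega⟩
    have hhead : sChain j (m + 1) * r (i 0) = r (i 0 + 1) * sChain (j + 1) m :=
      sChain_mul_r hj (hij 0).1 (by have := (hij 0).2; omega)
    have htail := ih (fun k => i k.succ) (hi.comp Fin.strictMono_succ) (j := j + 1) (m := m)
      (by omega) fun k => ⟨(hij 0).1.trans_lt (hi k.succ_pos), by have := (hij k.succ).2; omega⟩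
    rw [prodR_succ, ← mul_assoc, hhead, mul_assoc, htail, prodR_succ (fun k => i k + 1),
      mul_assoc]
    congr 3 <;> omega

lemma cElt_Icc (a b : ℕ) : cElt (Finset.Icc a b) = sChain a (b + 1 - a) := by
  rw [cElt, sChain, Nat.Icc_eq_range']
  congr
  exact List.mergeSort_eq_self _ (List.pairwise_le_range' 1)

theorem stmt14_general (n l : ℕ)
    (i : Fin l → ℕ) (hi : StrictMono i) (hi1 : ∀ k, 1 ≤ i k ∧ i k ≤ n - 1) :
    cElt (Finset.Icc 1 (n - 1)) * prodR i =
      prodR (fun k => i k + 1) * cElt (Finset.Icc (l + 1) (n - 1)) := by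
  have hrange : ∀ k, 1 ≤ i k ∧ i k < 1 + (n - 1 + 1 - 1) := fun k => by
    have := hi1 k; omega
  rw [cElt_Icc, cElt_Icc, sChain_mul_prodR i hi le_rfl hrange]
  congr 2 <;> omega

/-- for `0 ≤ l ≤ n-1` and `1 ≤ i_1 < ⋯ < i_l ≤ n-1`,
`s_1 s_2 ⋯ s_{n-1} · r_{i_1} ⋯ r_{i_l} = r_{i_1+1} ⋯ r_{i_l+1} · s_{l+1} ⋯ s_{n-1}`. -/
theorem stmt14 (n l : ℕ) (hn : 1 ≤ n) (hl : l ≤ n - 1)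
    (i : Fin l → ℕ) (hi : StrictMono i) (hi1 : ∀ k, 1 ≤ i k ∧ i k ≤ n - 1) :
    cElt (Finset.Icc 1 (n - 1)) * prodR i =
      prodR (fun k => i k + 1) * cElt (Finset.Icc (l + 1) (n - 1)) :=
  stmt14_general n l i hi hi1

end TypeB
end

section
/- Let 0 ≤ l ≤ n. Then a_l^{−1} = a_l, and for every i ∈ {1, …, n−1} with i ≠ l one has a_l s_i a_l = s_{l−i} if i < l, and a_l s_i a_l = s_i if i > l. In particular a_l normalizes the subgroup 𝔖_{l,n−l}. -/
/-!
Common setup: the Weyl group `W n` of type `B_n`, realized as the group of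
permutations `w` of `I_n = {±1, …, ±n}` (inside `Equiv.Perm ℤ`, fixing every
integer of absolute value `> n`) such that `w (-i) = - w i` for all `i`.
-/

namespace TypeB

/-!
`a l` is computed pointwise: it sends `k ∈ [1, l]` to `k - (l + 1)` and `-k` to `(l + 1) - k`,
and fixes every other integer. Hence it is an involution, and conjugating
`s i = (i, i+1)(-i, -(i+1))` by it just relabels the four moved points: for `i < l` they become
`-(l-i)-1, -(l-i), (l-i)+1, l-i`, which gives `s (l - i)`, while for `i > l` they are fixed.
Both cases send the generators of `𝔖_{l,n-l}` back into `𝔖_{l,n-l}`.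
-/

open Equiv

def rFun (m k : ℤ) : ℤ :=
  if k = 1 then -m
  else if 2 ≤ k ∧ k ≤ m then k - 1
  else if k = -1 then m
  else if -m ≤ k ∧ k ≤ -2 then k + 1
  else k

def aFun (l k : ℤ) : ℤ :=
  if 1 ≤ k ∧ k ≤ l then k - (l + 1)
  else if -l ≤ k ∧ k ≤ -1 then k + (l + 1)
  else k

lemma s_apply {i : ℕ} (hi : 1 ≤ i) (k : ℤ) :
    s i k = if k = (i : ℤ) then (i : ℤ) + 1 else if k = (i : ℤ) + 1 then (i : ℤ)
      else if k = -(i : ℤ) then -((i : ℤ) + 1) else if k = -((i : ℤ) + 1) then -(i : ℤ)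
      else k := by
  simp only [s, Perm.mul_apply, swap_apply_def]
  split_ifs <;> omega

lemma r_succ {m : ℕ} (hm : 1 ≤ m) : r (m + 1) = s m * r m := by
  obtain ⟨m, rfl⟩ := Nat.exists_eq_add_of_le' hm
  rfl

lemma r_apply {m : ℕ} (hm : 1 ≤ m) (k : ℤ) : r m k = rFun m k := by
  induction m, hm using Nat.le_induction generalizing k with
  | base =>
    simp only [r, t, rFun, swap_apply_def]
    split_ifs <;> omega
  | succ m hm ih =>
    rw [r_succ hm, Perm.mul_apply, ih, s_apply hm]
    simp only [rFun]
    push_cast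
    split_ifs <;> omega

lemma a_apply (l : ℕ) (k : ℤ) : a l k = aFun l k := by
  induction l generalizing k with
  | zero =>
    simp only [a, aFun, Perm.one_apply]
    split_ifs <;> omega
  | succ l ih =>
    rw [a, Perm.mul_apply, r_apply l.succ_pos, ih]
    simp only [rFun, aFun]
    push_cast
    split_ifs <;> omega

lemma a_mul_self (l : ℕ) : a l * a l = 1 := by
  ext k
  simp only [Perm.mul_apply, a_apply, aFun, Perm.one_apply]
  split_ifs <;> omega

lemma a_inv (l : ℕ) : (a l)⁻¹ = a l :=
  inv_eq_of_mul_eq_one_right (a_mul_self l)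

lemma mul_s_mul_inv (f : Perm ℤ) (i : ℕ) :
    f * s i * f⁻¹ = swap (f i) (f (i + 1)) * swap (f (-i)) (f (-(i + 1))) := by
  rw [s, swap_apply_apply, swap_apply_apply]
  group

lemma swap_neg_mul_swap_eq_s {m : ℕ} (hm : 1 ≤ m) :
    swap (-((m : ℤ) + 1)) (-m) * swap ((m : ℤ) + 1) m = s m := by
  rw [s, swap_comm ((m : ℤ) + 1), swap_comm (-((m : ℤ) + 1))]
  exact (Perm.disjoint_swap_swap (by grind)).commute.eq

lemma a_mul_a_eq_conj (l : ℕ) (x : Perm ℤ) : a l * x * a l = a l * x * (a l)⁻¹ := by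
  rw [a_inv]

lemma a_mul_s_mul_a_of_lt {l i : ℕ} (hi : 1 ≤ i) (hil : i < l) :
    a l * s i * a l = s (l - i) := by
  rw [a_mul_a_eq_conj, mul_s_mul_inv, ← swap_neg_mul_swap_eq_s (Nat.sub_pos_of_lt hil)]
  simp only [a_apply, aFun, Nat.cast_sub hil.le]
  congr 2 <;> split_ifs <;> omega

lemma a_mul_s_mul_a_of_gt {l i : ℕ} (hli : l < i) : a l * s i * a l = s i := by
  rw [a_mul_a_eq_conj, mul_s_mul_inv, s]
  simp only [a_apply, aFun]
  congr 2 <;> split_ifs <;> omega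

lemma SymP_map_conj_a_le {n l : ℕ} (hl : l ≤ n) :
    (SymP n l).map (MulAut.conj (a l)).toMonoidHom ≤ SymP n l := by
  rw [SymP, MonoidHom.map_closure, Subgroup.closure_le]
  rintro _ ⟨_, ⟨i, hi, hin, hil, rfl⟩, rfl⟩
  rw [MulEquiv.coe_toMonoidHom, MulAut.conj_apply, a_inv]
  rcases hil.lt_or_gt with h | h
  · rw [a_mul_s_mul_a_of_lt hi h]
    exact Subgroup.subset_closure ⟨l - i, by omega, by omega, by omega, rfl⟩
  · rw [a_mul_s_mul_a_of_gt h]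
    exact Subgroup.subset_closure ⟨i, hi, hin, hil, rfl⟩

/-- for `0 ≤ l ≤ n`: `a_l⁻¹ = a_l`; for `1 ≤ i ≤ n-1` with `i ≠ l`,
`a_l s_i a_l = s_{l-i}` if `i < l` and `a_l s_i a_l = s_i` if `i > l`; in
particular `a_l` normalizes `𝔖_{l,n-l}`. -/
theorem stmt15 (n l : ℕ) (hl : l ≤ n) :
    (a l)⁻¹ = a l ∧
    (∀ i : ℕ, 1 ≤ i → i < n → i ≠ l →
      (i < l → a l * s i * a l = s (l - i)) ∧ (l < i → a l * s i * a l = s i)) ∧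
    (∀ u ∈ SymP n l, a l * u * (a l)⁻¹ ∈ SymP n l) :=
  ⟨a_inv l, fun _ hi _ _ => ⟨a_mul_s_mul_a_of_lt hi, a_mul_s_mul_a_of_gt⟩,
    fun _ hu => SymP_map_conj_a_le hl (Subgroup.mem_map_of_mem _ hu)⟩

end TypeB
end
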